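/- arXiv:2502.09907 — 2 statements merged into one kernel-verified Lean document; each statement's English description precedes it below -/
import Mathlib

section
/- For every probability measure F on [0,1] and every bidding strategy s (Markov kernel) such that the induced bid distribution P_{s,F} is absolutely continuous with respect to Lebesgue measure: sup over all probability measures H on [0,1] of Reg_F(s,H) equals sup over h in [0,1] of R_F(s,h), which equals sup over all probability measures H on [0,1] of R_F(s,H). In other words, the worst-case regrets under the partial-information and full-information benchmarks coincide. -/
open MeasureTheory ProbabilityTheory Set

noncomputable section

namespace FPA

/-- The unit interval `[0,1] ⊆ ℝ`. -/
def Iu : Set ℝ := Set.Icc 0 1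

/-- `μ` is a probability measure on `[0,1]`. -/
def IsProbOn (μ : Measure ℝ) : Prop := IsProbabilityMeasure μ ∧ μ Iu = 1

/-- A bidding strategy: a Markov kernel from `[0,1]` to `[0,1]`. -/
def IsStrategy (s : Kernel ℝ ℝ) : Prop := IsMarkovKernel s ∧ ∀ v : ℝ, s v Iu = 1

/-- The buyer's utility `u(b,h;v) = (v−b)·1{b ≥ h}`. -/
def util (b h v : ℝ) : ℝ := (v - b) * (if h ≤ b then 1 else 0)

/-- Expected utility `U_F(s,H)`. -/
def eUtil (F : Measure ℝ) (s : Kernel ℝ ℝ) (H : Measure ℝ) : ℝ :=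
  ∫ v, ∫ h, ∫ b, util b h v ∂(s v) ∂H ∂F

/-- Regret `Reg_F(s,H) = sup_{s'∈S} U_F(s',H) − U_F(s,H)`. -/
def regret (F : Measure ℝ) (s : Kernel ℝ ℝ) (H : Measure ℝ) : ℝ :=
  (⨆ s' : {k : Kernel ℝ ℝ // IsStrategy k}, eUtil F s'.1 H) - eUtil F s H

/-- Induced bid distribution `P_{s,F}`. -/
def bidDist (F : Measure ℝ) (s : Kernel ℝ ℝ) : Measure ℝ := F.bind (fun v => s v)

/-- CDF of a measure on `[0,1]`: `F(x) = F([0,x])`. -/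
def cdf01 (F : Measure ℝ) (x : ℝ) : ℝ := (F (Set.Iic x)).toReal

/-- Generalized inverse `F⁻(t) = inf {x ∈ [0,1] : F(x) ≥ t}`. -/
def qinv (F : Measure ℝ) (t : ℝ) : ℝ := sInf {x | x ∈ Iu ∧ t ≤ cdf01 F x}

/-- Full-information benchmark against a deterministic highest competing bid `h`. -/
def bench (F : Measure ℝ) (h : ℝ) : ℝ := ∫ v, (v - h) * (if h ≤ v then 1 else 0) ∂F

/-- Full-information regret `R_F(s,H)`. -/
def fregret (F : Measure ℝ) (s : Kernel ℝ ℝ) (H : Measure ℝ) : ℝ :=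
  (∫ h, bench F h ∂H) - eUtil F s H

/-- Absolute continuity of a function on `[0,1]` (FTC characterization). -/
def AbsContOn01 (f : ℝ → ℝ) : Prop :=
  ∃ g : ℝ → ℝ, IntervalIntegrable g volume 0 1 ∧
    ∀ x ∈ Iu, f x = f 0 + ∫ t in (0:ℝ)..x, g t

/-- The set of quantiles corresponding to value `v`: `Y(v) = {y ∈ [0,1] : F⁻(y) = v}`. -/
def Yset (F : Measure ℝ) (v : ℝ) : Set ℝ := {y | y ∈ Iu ∧ qinv F y = v}

/-- Uniform distribution on a set `A ⊆ ℝ`. -/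
def unifOn (A : Set ℝ) : Measure ℝ := (volume A)⁻¹ • volume.restrict A

/-- `s` is the bidding strategy corresponding to the quantile-based bidding strategy `Q`:
it bids `Q(F(v))` when `F({v}) = 0`, and the pushforward under `Q` of the uniform
distribution on `Y(v)` when `F({v}) > 0`. -/
def IsQuantileStrategy (F : Measure ℝ) (Q : ℝ → ℝ) (s : Kernel ℝ ℝ) : Prop :=
  IsStrategy s ∧ ∀ v ∈ Iu,
    s v = if F {v} = 0 then Measure.dirac (Q (cdf01 F v)) else (unifOn (Yset F v)).map Q

/-- The candidate worst-case highest-competing-bid CDF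
`H*(x) = exp(−∫_{(Q*)⁻¹(x)}^1 dt/(1−F(Q*(t))))`. -/
def Hstar (F : Measure ℝ) (Q : ℝ → ℝ) (x : ℝ) : ℝ :=
  Real.exp (-(∫ t in (Function.invFunOn Q Iu x)..(1:ℝ), 1 / (1 - cdf01 F (Q t))))

/-!
Ties are won by the bidder, so against a point mass `δ_h` the strategy "bid `h` exactly when
`v ≥ h`, else bid `0`" earns the full-information payoff `(v - h)⁺`, and no bid ever earns more
than that. Hence `Reg_F(s, H) ≤ R_F(s, H)` for every `H`, with equality at point masses. On the
other hand `R_F(s, H)` is affine in `H`, the `H`-average of `R_F(s, δ_h)`, so it never exceeds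
`sup_h R_F(s, δ_h)`.
-/

lemma ae_mem_Iu {μ : Measure ℝ} (hμ : IsProbOn μ) : ∀ᵐ x ∂μ, x ∈ Iu :=
  have := hμ.1
  mem_ae_iff.2 ((prob_compl_eq_zero_iff measurableSet_Icc).2 hμ.2)

lemma zero_mem_Iu : (0 : ℝ) ∈ Iu := ⟨le_rfl, zero_le_one⟩

lemma abs_le_one_of_mem_Iu {x : ℝ} (hx : x ∈ Iu) : |x| ≤ 1 :=
  abs_le.2 ⟨by linarith [hx.1], hx.2⟩

lemma isProbOn_dirac {x : ℝ} (hx : x ∈ Iu) : IsProbOn (Measure.dirac x) :=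
  ⟨inferInstance, Measure.dirac_apply_of_mem hx⟩

lemma IsStrategy.isProbOn {s : Kernel ℝ ℝ} (hs : IsStrategy s) (v : ℝ) : IsProbOn (s v) :=
  ⟨hs.1.isProbabilityMeasure v, hs.2 v⟩

lemma integrable_of_abs_le_on_Iu {μ : Measure ℝ} (hμ : IsProbOn μ) {f : ℝ → ℝ}
    (hf : AEStronglyMeasurable f μ) {C : ℝ} (hC : ∀ x ∈ Iu, |f x| ≤ C) : Integrable f μ :=
  have := hμ.1
  Integrable.of_bound hf C
    ((ae_mem_Iu hμ).mono fun x hx => (Real.norm_eq_abs _).trans_le (hC x hx))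

lemma abs_integral_le_of_abs_le_on_Iu {μ : Measure ℝ} (hμ : IsProbOn μ) {f : ℝ → ℝ} {C : ℝ}
    (hC : ∀ x ∈ Iu, |f x| ≤ C) : |∫ x, f x ∂μ| ≤ C := by
  have := hμ.1
  simpa using norm_integral_le_of_norm_le_const
    ((ae_mem_Iu hμ).mono fun x hx => (Real.norm_eq_abs _).trans_le (hC x hx))

lemma measurable_util : Measurable fun p : ℝ × ℝ × ℝ => util p.1 p.2.1 p.2.2 :=
  (measurable_snd.snd.sub measurable_fst).mul <|
    Measurable.ite (measurableSet_le measurable_snd.fst measurable_fst)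
      measurable_const measurable_const

lemma abs_util_le_one {b v : ℝ} (hb : b ∈ Iu) (hv : v ∈ Iu) (h : ℝ) : |util b h v| ≤ 1 := by
  obtain ⟨⟨hb0, hb1⟩, hv0, hv1⟩ := And.intro hb hv
  unfold util
  rw [abs_le]
  split_ifs <;> constructor <;> linarith

lemma util_le_max_sub (b h v : ℝ) : util b h v ≤ max (v - h) 0 := by
  unfold util
  split_ifs with hb
  · rw [mul_one]
    exact le_max_of_le_left (sub_le_sub_left hb v)
  · rw [mul_zero]
    exact le_max_right _ _

lemma bench_eq_integral_max_sub (F : Measure ℝ) (h : ℝ) :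
    bench F h = ∫ v, max (v - h) 0 ∂F := by
  refine integral_congr_ae (ae_of_all _ fun v => ?_)
  dsimp only
  split_ifs with hv
  · simp [hv]
  · simp [(not_le.1 hv).le]

lemma abs_max_sub_le {v : ℝ} (hv : v ∈ Iu) (h : ℝ) : |max (v - h) 0| ≤ 1 + |h| := by
  rw [abs_of_nonneg (le_max_right _ _)]
  exact max_le (by linarith [hv.2, neg_abs_le h]) (by positivity)

lemma abs_bench_le {F : Measure ℝ} (hF : IsProbOn F) (h : ℝ) : |bench F h| ≤ 1 + |h| := by
  rw [bench_eq_integral_max_sub]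
  exact abs_integral_le_of_abs_le_on_Iu hF fun v hv => abs_max_sub_le hv h

lemma integrable_bench {F H : Measure ℝ} (hF : IsProbOn F) (hH : IsProbOn H) :
    Integrable (bench F) H := by
  have := hF.1
  have hmeas : StronglyMeasurable (bench F) := by
    simp only [funext (bench_eq_integral_max_sub F)]
    exact StronglyMeasurable.integral_prod_left (f := fun v h => max (v - h) 0)
      (by fun_prop : Measurable fun p : ℝ × ℝ => max (p.1 - p.2) 0).stronglyMeasurable
  refine integrable_of_abs_le_on_Iu hH hmeas.aestronglyMeasurable (C := 2) fun h hh => ?_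
  linarith [abs_bench_le hF h, abs_le_one_of_mem_Iu hh]

def interimUtil (s : Kernel ℝ ℝ) (v h : ℝ) : ℝ := ∫ b, util b h v ∂(s v)

lemma stronglyMeasurable_interimUtil (s : Kernel ℝ ℝ) [IsSFiniteKernel s] :
    StronglyMeasurable (Function.uncurry (interimUtil s)) := by
  have hutil : Measurable fun q : (ℝ × ℝ) × ℝ => util q.2 q.1.2 q.1.1 :=
    measurable_util.comp (measurable_snd.prodMk (measurable_fst.snd.prodMk measurable_fst.fst))
  exact StronglyMeasurable.integral_kernel_prod_right (κ := s.comap Prod.fst measurable_fst)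
    (f := fun p b => util b p.2 p.1) hutil.stronglyMeasurable

lemma abs_interimUtil_le_one {s : Kernel ℝ ℝ} (hs : IsStrategy s) {v : ℝ} (hv : v ∈ Iu)
    (h : ℝ) : |interimUtil s v h| ≤ 1 :=
  abs_integral_le_of_abs_le_on_Iu (hs.isProbOn v) fun _ hb => abs_util_le_one hb hv h

lemma interimUtil_le_max_sub {s : Kernel ℝ ℝ} (hs : IsStrategy s) {v : ℝ} (hv : v ∈ Iu)
    (h : ℝ) : interimUtil s v h ≤ max (v - h) 0 := by
  have := hs.1
  have hmeas : Measurable fun b => util b h v :=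
    measurable_util.comp (measurable_id.prodMk (measurable_const (a := (h, v))))
  have hint : Integrable (fun b => util b h v) (s v) :=
    integrable_of_abs_le_on_Iu (hs.isProbOn v) hmeas.aestronglyMeasurable
      fun _ hb => abs_util_le_one hb hv h
  calc interimUtil s v h ≤ ∫ _, max (v - h) 0 ∂(s v) :=
        integral_mono hint (integrable_const _) fun b => util_le_max_sub b h v
    _ = max (v - h) 0 := by simp

lemma eUtil_dirac (F : Measure ℝ) (s : Kernel ℝ ℝ) (h : ℝ) :
    eUtil F s (Measure.dirac h) = ∫ v, interimUtil s v h ∂F := by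
  simp only [eUtil, integral_dirac, interimUtil]

lemma abs_eUtil_dirac_le_one {F : Measure ℝ} (hF : IsProbOn F) {s : Kernel ℝ ℝ}
    (hs : IsStrategy s) (h : ℝ) : |eUtil F s (Measure.dirac h)| ≤ 1 := by
  rw [eUtil_dirac]
  exact abs_integral_le_of_abs_le_on_Iu hF fun v hv => abs_interimUtil_le_one hs hv h

lemma integrable_eUtil_dirac {F : Measure ℝ} (hF : IsProbOn F) {s : Kernel ℝ ℝ}
    (hs : IsStrategy s) (H : Measure ℝ) [IsFiniteMeasure H] :
    Integrable (fun h => eUtil F s (Measure.dirac h)) H := by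
  have := hF.1
  have := hs.1
  refine Integrable.of_bound ?_ 1 (ae_of_all _ fun h => abs_eUtil_dirac_le_one hF hs h)
  simp only [eUtil_dirac]
  exact (stronglyMeasurable_interimUtil s).integral_prod_left.aestronglyMeasurable

lemma eUtil_eq_integral_eUtil_dirac {F : Measure ℝ} (hF : IsProbOn F) {s : Kernel ℝ ℝ}
    (hs : IsStrategy s) (H : Measure ℝ) [IsFiniteMeasure H] :
    eUtil F s H = ∫ h, eUtil F s (Measure.dirac h) ∂H := by
  have := hF.1
  have := hs.1
  simp only [eUtil_dirac]
  refine integral_integral_swap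
    (Integrable.of_bound (stronglyMeasurable_interimUtil s).aestronglyMeasurable 1 ?_)
  exact (Measure.quasiMeasurePreserving_fst.ae (ae_mem_Iu hF)).mono fun p hv =>
    abs_interimUtil_le_one hs hv p.2

lemma eUtil_dirac_le_bench {F : Measure ℝ} (hF : IsProbOn F) {s : Kernel ℝ ℝ}
    (hs : IsStrategy s) (h : ℝ) : eUtil F s (Measure.dirac h) ≤ bench F h := by
  have := hs.1
  rw [eUtil_dirac, bench_eq_integral_max_sub]
  refine integral_mono_ae ?_ ?_ ((ae_mem_Iu hF).mono fun v hv => interimUtil_le_max_sub hs hv h)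
  · exact integrable_of_abs_le_on_Iu hF
      ((stronglyMeasurable_interimUtil s).comp_measurable
        (measurable_id.prodMk measurable_const)).aestronglyMeasurable
      fun v hv => abs_interimUtil_le_one hs hv h
  · exact integrable_of_abs_le_on_Iu hF (by fun_prop) fun v hv => abs_max_sub_le hv h

lemma eUtil_le_integral_bench {F H : Measure ℝ} (hF : IsProbOn F) (hH : IsProbOn H)
    {s : Kernel ℝ ℝ} (hs : IsStrategy s) : eUtil F s H ≤ ∫ h, bench F h ∂H := by
  have := hH.1
  rw [eUtil_eq_integral_eUtil_dirac hF hs]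
  exact integral_mono (integrable_eUtil_dirac hF hs H) (integrable_bench hF hH)
    (eUtil_dirac_le_bench hF hs)

def bestResponse (h : ℝ) : Kernel ℝ ℝ :=
  Kernel.deterministic (fun v => if h ≤ v then h else 0)
    (Measurable.ite measurableSet_Ici measurable_const measurable_const)

lemma isStrategy_bestResponse {h : ℝ} (hh : h ∈ Iu) : IsStrategy (bestResponse h) := by
  refine ⟨Kernel.isMarkovKernel_deterministic _, fun v => ?_⟩
  rw [bestResponse, Kernel.deterministic_apply]
  apply Measure.dirac_apply_of_mem
  split_ifs
  exacts [hh, zero_mem_Iu]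

instance : Nonempty {k : Kernel ℝ ℝ // IsStrategy k} :=
  ⟨⟨_, isStrategy_bestResponse zero_mem_Iu⟩⟩

lemma eUtil_bestResponse {F : Measure ℝ} (hF : IsProbOn F) (h : ℝ) :
    eUtil F (bestResponse h) (Measure.dirac h) = bench F h := by
  rw [eUtil_dirac, bench_eq_integral_max_sub]
  refine integral_congr_ae ((ae_mem_Iu hF).mono fun v hv => ?_)
  by_cases hhv : h ≤ v
  · simp [interimUtil, bestResponse, util, hhv]
  · have : ¬ h ≤ 0 := fun h0 => hhv (h0.trans hv.1)
    simp [interimUtil, bestResponse, util, hhv, this, (not_le.1 hhv).le]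

lemma iSup_eUtil_dirac {F : Measure ℝ} (hF : IsProbOn F) {h : ℝ} (hh : h ∈ Iu) :
    ⨆ s' : {k : Kernel ℝ ℝ // IsStrategy k}, eUtil F s'.1 (Measure.dirac h) = bench F h :=
  ciSup_eq_of_forall_le_of_forall_lt_exists_gt (fun s' => eUtil_dirac_le_bench hF s'.2 h)
    fun _ hw => ⟨⟨_, isStrategy_bestResponse hh⟩, by rwa [eUtil_bestResponse hF]⟩

lemma fregret_dirac (F : Measure ℝ) (s : Kernel ℝ ℝ) (h : ℝ) :
    fregret F s (Measure.dirac h) = bench F h - eUtil F s (Measure.dirac h) := by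
  rw [fregret, integral_dirac]

lemma regret_dirac {F : Measure ℝ} (hF : IsProbOn F) (s : Kernel ℝ ℝ) {h : ℝ} (hh : h ∈ Iu) :
    regret F s (Measure.dirac h) = fregret F s (Measure.dirac h) := by
  rw [regret, iSup_eUtil_dirac hF hh, fregret_dirac]

lemma regret_le_fregret {F H : Measure ℝ} (hF : IsProbOn F) (hH : IsProbOn H)
    (s : Kernel ℝ ℝ) : regret F s H ≤ fregret F s H :=
  sub_le_sub_right (ciSup_le fun s' => eUtil_le_integral_bench hF hH s'.2) _

lemma integrable_fregret_dirac {F H : Measure ℝ} (hF : IsProbOn F) (hH : IsProbOn H)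
    {s : Kernel ℝ ℝ} (hs : IsStrategy s) :
    Integrable (fun h => fregret F s (Measure.dirac h)) H := by
  have := hH.1
  exact ((integrable_bench hF hH).sub (integrable_eUtil_dirac hF hs H)).congr
    (ae_of_all _ fun h => (fregret_dirac F s h).symm)

lemma fregret_eq_integral_fregret_dirac {F H : Measure ℝ} (hF : IsProbOn F) (hH : IsProbOn H)
    {s : Kernel ℝ ℝ} (hs : IsStrategy s) :
    fregret F s H = ∫ h, fregret F s (Measure.dirac h) ∂H := by
  have := hH.1
  simp only [fregret_dirac]
  rw [integral_sub (integrable_bench hF hH) (integrable_eUtil_dirac hF hs H),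
    ← eUtil_eq_integral_eUtil_dirac hF hs, fregret]

lemma bddAbove_fregret_dirac {F : Measure ℝ} (hF : IsProbOn F) {s : Kernel ℝ ℝ}
    (hs : IsStrategy s) : BddAbove (range fun h : Iu => fregret F s (Measure.dirac h)) := by
  refine ⟨3, forall_mem_range.2 fun h => ?_⟩
  rw [fregret_dirac]
  linarith [abs_le.1 (abs_bench_le hF h), abs_le.1 (abs_eUtil_dirac_le_one hF hs h),
    abs_le_one_of_mem_Iu h.2]

lemma fregret_le_iSup_fregret_dirac {F H : Measure ℝ} (hF : IsProbOn F) (hH : IsProbOn H)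
    {s : Kernel ℝ ℝ} (hs : IsStrategy s) :
    fregret F s H ≤ ⨆ h : Iu, fregret F s (Measure.dirac h) := by
  have := hH.1
  rw [fregret_eq_integral_fregret_dirac hF hH hs]
  calc ∫ h, fregret F s (Measure.dirac h) ∂H
      ≤ ∫ _, ⨆ h : Iu, fregret F s (Measure.dirac h) ∂H :=
        integral_mono_ae (integrable_fregret_dirac hF hH hs) (integrable_const _)
          ((ae_mem_Iu hH).mono fun h hh => le_ciSup (bddAbove_fregret_dirac hF hs) ⟨h, hh⟩)
    _ = ⨆ h : Iu, fregret F s (Measure.dirac h) := by simp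

theorem full_info_reduction_general
    (F : Measure ℝ) (hF : IsProbOn F) (s : Kernel ℝ ℝ) (hs : IsStrategy s) :
    (⨆ H : {H : Measure ℝ // IsProbOn H}, regret F s H.1)
        = (⨆ h : Iu, fregret F s (Measure.dirac (h : ℝ)))
      ∧ (⨆ h : Iu, fregret F s (Measure.dirac (h : ℝ)))
        = ⨆ H : {H : Measure ℝ // IsProbOn H}, fregret F s H.1 := by
  have : Nonempty Iu := ⟨⟨0, zero_mem_Iu⟩⟩
  have : Nonempty {H : Measure ℝ // IsProbOn H} := ⟨⟨_, isProbOn_dirac zero_mem_Iu⟩⟩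
  set B := ⨆ h : Iu, fregret F s (Measure.dirac (h : ℝ))
  have hfregret : ∀ H : {H : Measure ℝ // IsProbOn H}, fregret F s H.1 ≤ B :=
    fun H => fregret_le_iSup_fregret_dirac hF H.2 hs
  have hregret : ∀ H : {H : Measure ℝ // IsProbOn H}, regret F s H.1 ≤ B :=
    fun H => (regret_le_fregret hF H.2 s).trans (hfregret H)
  refine ⟨le_antisymm (ciSup_le hregret) (ciSup_le fun h => ?_),
    le_antisymm (ciSup_le fun h => ?_) (ciSup_le hfregret)⟩
  · rw [← regret_dirac hF s h.2]
    exact le_ciSup ⟨B, forall_mem_range.2 hregret⟩ ⟨_, isProbOn_dirac h.2⟩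
  · exact le_ciSup ⟨B, forall_mem_range.2 hfregret⟩ ⟨_, isProbOn_dirac h.2⟩

/-- Corollary: full-information benchmark: for any value distribution `F`
on `[0,1]` and any strategy `s` with absolutely continuous induced bid distribution, the
worst-case partial-information regret equals the worst-case full-information regret over
deterministic bids, which equals the worst-case full-information regret over all `H`. -/
theorem full_info_reduction
    (F : Measure ℝ) (hF : IsProbOn F) (s : Kernel ℝ ℝ) (hs : IsStrategy s)
    (hac : bidDist F s ≪ volume) :
    (⨆ H : {H : Measure ℝ // IsProbOn H}, regret F s H.1)
        = (⨆ h : Iu, fregret F s (Measure.dirac (h : ℝ)))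
      ∧ (⨆ h : Iu, fregret F s (Measure.dirac (h : ℝ)))
        = ⨆ H : {H : Measure ℝ // IsProbOn H}, fregret F s H.1 :=
  full_info_reduction_general F hF s hs

end FPA
end
end

section
/- Let F be a probability measure on [0,1] with F({0}) = 0, and let Q* : [0,1] → [0,1] be an absolutely continuous strictly increasing function with Q*(0) = 0, 0 < Q*(y) < F⁻(y) for all y in (0,1], and (Q*)'(y) = (F⁻(y) − Q*(y)) / (1 − F(Q*(y))) for almost every y. Then for all y in [0,1]: ∫_{Q*(y)}^1 (1 − F(t)) dt − ∫_y^1 (F⁻(t) − Q*(t)) dt = ∫_0^1 Q*(t) dt. -/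
open MeasureTheory ProbabilityTheory Set

noncomputable section

namespace FPA

/-! With `Ψ x = ∫₀ˣ (1 - F)`, the differential equation says exactly that `Ψ ∘ Q*` has
derivative `F⁻ - Q*` at almost every point: the chain rule needs `F` continuous at `Q*(t)`, and
this fails only for countably many `t` because `Q*` is injective. As `Ψ` is `1`-Lipschitz,
`Ψ ∘ Q*` is absolutely continuous, so `∫₀^{Q*(y)} (1 - F) = ∫₀^y (F⁻ - Q*)`. Combined with the
quantile identity `∫₀¹ F⁻ = ∫₀¹ (1 - F)` this is the claim. -/

open Filter intervalIntegral

theorem _root_.AbsolutelyContinuousOnInterval.congr {X : Type*} [PseudoMetricSpace X]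
    {f g : ℝ → X} {a b : ℝ} (hf : AbsolutelyContinuousOnInterval f a b)
    (hfg : EqOn f g (uIcc a b)) : AbsolutelyContinuousOnInterval g a b := by
  refine Tendsto.congr' ?_ hf
  filter_upwards [eventually_inf_principal.mpr (Eventually.of_forall fun _ hE => hE)]
    with E hE
  refine Finset.sum_congr rfl fun i hi => ?_
  rw [hfg (hE.1 i hi).1, hfg (hE.1 i hi).2]

theorem _root_.LipschitzWith.comp_absolutelyContinuousOnInterval {X Y : Type*}
    [PseudoMetricSpace X] [PseudoMetricSpace Y] {g : X → Y} {K : NNReal}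
    (hg : LipschitzWith K g) {f : ℝ → X} {a b : ℝ} (hf : AbsolutelyContinuousOnInterval f a b) :
    AbsolutelyContinuousOnInterval (g ∘ f) a b := by
  have hK := (tendsto_const_nhds (x := (K : ℝ))).mul hf
  rw [mul_zero] at hK
  refine squeeze_zero (fun _ => Finset.sum_nonneg fun _ _ => dist_nonneg) (fun E => ?_) hK
  rw [Finset.mul_sum]
  exact Finset.sum_le_sum fun i _ => hg.dist_le_mul _ _

theorem _root_.AbsolutelyContinuousOnInterval.integral_eq_sub_of_ae_hasDerivAt
    {f f' : ℝ → ℝ} {a b : ℝ} (hf : AbsolutelyContinuousOnInterval f a b)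
    (hf' : ∀ᵐ t, t ∈ uIoc a b → HasDerivAt f (f' t) t) :
    ∫ t in a..b, f' t = f b - f a := by
  rw [← hf.integral_deriv_eq_sub]
  refine integral_congr_ae ?_
  filter_upwards [hf'] with t ht hmem using (ht hmem).deriv.symm

theorem _root_.lipschitzWith_primitive_of_norm_le {E : Type*} [NormedAddCommGroup E]
    [NormedSpace ℝ E] {f : ℝ → E} {C : NNReal} (hf : ∀ x, ‖f x‖ ≤ C)
    (hint : ∀ a b, IntervalIntegrable f volume a b) (c : ℝ) :
    LipschitzWith C (fun x => ∫ t in c..x, f t) :=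
  LipschitzWith.of_dist_le_mul fun x y => by
    rw [dist_eq_norm, integral_interval_sub_left (hint c x) (hint c y), Real.dist_eq]
    exact norm_integral_le_of_norm_le_const fun t _ => hf t

theorem _root_.Monotone.ae_continuousAt_comp_of_injOn {g f : ℝ → ℝ} (hg : Monotone g)
    {s : Set ℝ} (hf : InjOn f s) : ∀ᵐ t, t ∈ s → ContinuousAt g (f t) := by
  have hcount : {t | t ∈ s ∧ ¬ ContinuousAt g (f t)}.Countable :=
    MapsTo.countable_of_injOn (fun t ht => ht.2) (hf.mono fun t ht => ht.1)
      hg.countable_not_continuousAt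
  filter_upwards [hcount.ae_notMem volume] with t ht hts
  by_contra hdisc
  exact ht ⟨hts, hdisc⟩

theorem AbsContOn01.absolutelyContinuousOnInterval {f : ℝ → ℝ} (hf : AbsContOn01 f) :
    AbsolutelyContinuousOnInterval f 0 1 := by
  obtain ⟨g, hg, hfg⟩ := hf
  refine ((isometry_add_left (f 0)).lipschitz.comp_absolutelyContinuousOnInterval
    (hg.absolutelyContinuousOnInterval_intervalIntegral (c := 0) (by simp))).congr ?_
  intro x hx
  rw [uIcc_of_le zero_le_one] at hx
  exact (hfg x hx).symm

variable {F : Measure ℝ}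

theorem cdf01_eq_cdf [IsProbabilityMeasure F] : cdf01 F = cdf F :=
  funext fun x => (cdf_eq_real F x).symm

theorem cdf01_one (hF : IsProbOn F) : cdf01 F 1 = 1 := by
  have := hF.1
  have h : F (Iic 1) = 1 := le_antisymm prob_le_one (hF.2 ▸ measure_mono Icc_subset_Iic_self)
  simp [cdf01, h]

theorem cdf01_of_one_le (hF : IsProbOn F) {x : ℝ} (hx : 1 ≤ x) : cdf01 F x = 1 := by
  have := hF.1
  refine le_antisymm ?_ ?_
  · rw [cdf01_eq_cdf]; exact cdf_le_one F x
  · rw [← cdf01_one hF, cdf01_eq_cdf]; exact monotone_cdf F hx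

theorem monotone_cdf01 [IsProbabilityMeasure F] : Monotone (cdf01 F) :=
  cdf01_eq_cdf (F := F) ▸ monotone_cdf F

theorem antitone_one_sub_cdf01 [IsProbabilityMeasure F] : Antitone (fun x => 1 - cdf01 F x) :=
  fun _ _ h => sub_le_sub_left (monotone_cdf01 h) 1

theorem intervalIntegrable_one_sub_cdf01 [IsProbabilityMeasure F] (a b : ℝ) :
    IntervalIntegrable (fun x => 1 - cdf01 F x) volume a b :=
  antitone_one_sub_cdf01.intervalIntegrable

theorem lipschitzWith_primitive_one_sub_cdf01 [IsProbabilityMeasure F] :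
    LipschitzWith 1 (fun x => ∫ u in (0:ℝ)..x, (1 - cdf01 F u)) := by
  refine lipschitzWith_primitive_of_norm_le (fun x => ?_) intervalIntegrable_one_sub_cdf01 0
  rw [cdf01_eq_cdf, Real.norm_of_nonneg (sub_nonneg.mpr (cdf_le_one F x))]
  simpa using cdf_nonneg F x

theorem bddBelow_setOf_le_cdf01 {t : ℝ} : BddBelow {x | x ∈ Iu ∧ t ≤ cdf01 F x} :=
  ⟨0, fun _ hx => hx.1.1⟩

theorem one_mem_setOf_le_cdf01 (hF : IsProbOn F) {t : ℝ} (ht : t ≤ 1) :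
    (1 : ℝ) ∈ {x | x ∈ Iu ∧ t ≤ cdf01 F x} :=
  ⟨right_mem_Icc.mpr zero_le_one, (cdf01_one hF).symm ▸ ht⟩

theorem qinv_le_one (hF : IsProbOn F) {t : ℝ} (ht : t ≤ 1) : qinv F t ≤ 1 :=
  csInf_le bddBelow_setOf_le_cdf01 (one_mem_setOf_le_cdf01 hF ht)

theorem qinv_monotoneOn (hF : IsProbOn F) : MonotoneOn (qinv F) (Iic 1) :=
  fun _ _ _ ht hst => csInf_le_csInf bddBelow_setOf_le_cdf01 ⟨1, one_mem_setOf_le_cdf01 hF ht⟩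
    fun _ hx => ⟨hx.1, hst.trans hx.2⟩

theorem qinv_le_iff_le_cdf01 (hF : IsProbOn F) {t s : ℝ} (ht : t ≤ 1) (hs : 0 ≤ s) :
    qinv F t ≤ s ↔ t ≤ cdf01 F s := by
  have := hF.1
  constructor
  · intro h
    rw [cdf01_eq_cdf, ← (cdf F).iInf_Ioi_eq]
    refine le_ciInf fun x => ?_
    obtain ⟨z, hz, hzx⟩ := (csInf_lt_iff bddBelow_setOf_le_cdf01
      ⟨1, one_mem_setOf_le_cdf01 hF ht⟩).mp (h.trans_lt x.2)
    rw [← cdf01_eq_cdf]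
    exact hz.2.trans (monotone_cdf01 hzx.le)
  · intro h
    rcases le_or_gt s 1 with hs1 | hs1
    · exact csInf_le bddBelow_setOf_le_cdf01 ⟨⟨hs, hs1⟩, h⟩
    · exact (qinv_le_one hF ht).trans hs1.le

theorem cdf01_lt_iff_lt_qinv (hF : IsProbOn F) {t s : ℝ} (ht : t ≤ 1) (hs : 0 ≤ s) :
    cdf01 F s < t ↔ s < qinv F t := by
  simpa only [not_le] using (qinv_le_iff_le_cdf01 hF ht hs).not.symm

theorem integral_qinv_eq_integral_one_sub_cdf01 (hF : IsProbOn F) :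
    ∫ t in (0:ℝ)..1, qinv F t = ∫ x in (0:ℝ)..1, (1 - cdf01 F x) := by
  have := hF.1
  have hint : IntegrableOn (qinv F) (Ioc 0 1) :=
    ((qinv_monotoneOn hF).mono (by simp [Icc_subset_Iic_self])
      |>.intervalIntegrable (μ := volume)).1
  have hnonneg : 0 ≤ᵐ[volume.restrict (Ioc 0 1)] qinv F :=
    Eventually.of_forall fun _ => Real.sInf_nonneg fun _ hx => hx.1.1
  have hlevel : ∀ s ∈ Ioi (0:ℝ),
      (volume.restrict (Ioc (0:ℝ) 1)).real {t | s < qinv F t} = 1 - cdf01 F s := by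
    intro s hs
    have hset : {t | s < qinv F t} ∩ Ioc 0 1 = Ioc (cdf01 F s) 1 := by
      ext t
      simp only [mem_inter_iff, mem_ofPred_eq, mem_Ioc]
      constructor
      · rintro ⟨hlt, -, ht1⟩
        exact ⟨(cdf01_lt_iff_lt_qinv hF ht1 hs.le).mpr hlt, ht1⟩
      · rintro ⟨hlt, ht1⟩
        exact ⟨(cdf01_lt_iff_lt_qinv hF ht1 hs.le).mp hlt, ENNReal.toReal_nonneg.trans_lt hlt, ht1⟩
    rw [measureReal_restrict_apply' measurableSet_Ioc, hset, Real.volume_real_Ioc,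
      max_eq_left (sub_nonneg.mpr ?_)]
    rw [cdf01_eq_cdf]; exact cdf_le_one F s
  rw [integral_of_le zero_le_one, integral_of_le zero_le_one,
    hint.integral_eq_integral_meas_lt hnonneg, setIntegral_congr_fun measurableSet_Ioi hlevel]
  refine setIntegral_eq_of_subset_of_forall_sdiff_eq_zero measurableSet_Ioi
    Ioc_subset_Ioi_self fun s hs => ?_
  rw [cdf01_of_one_le hF (not_le.mp fun h => hs.2 ⟨hs.1, h⟩).le, sub_self]

theorem hasDerivAt_primitive_one_sub_cdf01_comp (hF : IsProbOn F) {Q : ℝ → ℝ} {t : ℝ}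
    (ht : t ≤ 1) (hQt : 0 ≤ Q t) (hQlt : Q t < qinv F t)
    (hcont : ContinuousAt (cdf01 F) (Q t))
    (hQ' : HasDerivAt Q ((qinv F t - Q t) / (1 - cdf01 F (Q t))) t) :
    HasDerivAt (fun x => ∫ u in (0:ℝ)..Q x, (1 - cdf01 F u)) (qinv F t - Q t) t := by
  have := hF.1
  have hpos : 0 < 1 - cdf01 F (Q t) :=
    sub_pos.mpr (((cdf01_lt_iff_lt_qinv hF ht hQt).mpr hQlt).trans_le ht)
  have hprim : HasDerivAt (fun x => ∫ u in (0:ℝ)..x, (1 - cdf01 F u)) (1 - cdf01 F (Q t)) (Q t) :=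
    integral_hasDerivAt_right (intervalIntegrable_one_sub_cdf01 0 _)
      (antitone_one_sub_cdf01 (F := F)).measurable.stronglyMeasurable.stronglyMeasurableAtFilter
      (continuousAt_const.sub hcont)
  have hcomp := hprim.comp t hQ'
  rwa [mul_div_cancel₀ _ hpos.ne'] at hcomp

theorem integral_one_sub_cdf01_eq_integral_qinv_sub (hF : IsProbOn F) {Q : ℝ → ℝ}
    (hQac : AbsolutelyContinuousOnInterval Q 0 1) (hQinj : InjOn Q Iu) (hQ0 : Q 0 = 0)
    (hQbd : ∀ t ∈ Ioc (0:ℝ) 1, 0 < Q t ∧ Q t < qinv F t)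
    (hode : ∀ᵐ t ∂(volume.restrict Iu),
      HasDerivAt Q ((qinv F t - Q t) / (1 - cdf01 F (Q t))) t)
    {y : ℝ} (hy : y ∈ Iu) :
    ∫ u in (0:ℝ)..Q y, (1 - cdf01 F u) = ∫ t in (0:ℝ)..y, (qinv F t - Q t) := by
  have := hF.1
  have hΦ : AbsolutelyContinuousOnInterval (fun x => ∫ u in (0:ℝ)..Q x, (1 - cdf01 F u)) 0 y :=
    (lipschitzWith_primitive_one_sub_cdf01 (F := F)).comp_absolutelyContinuousOnInterval
      (hQac.mono (uIcc_subset_uIcc left_mem_uIcc (by rwa [uIcc_of_le zero_le_one])))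
  rw [hΦ.integral_eq_sub_of_ae_hasDerivAt, hQ0, integral_same, sub_zero]
  filter_upwards [(ae_restrict_iff' measurableSet_Icc).mp hode,
    (monotone_cdf01 (F := F)).ae_continuousAt_comp_of_injOn hQinj] with t hQ' hcont ht
  rw [uIoc_of_le hy.1] at ht
  have htIu : t ∈ Iu := ⟨ht.1.le, ht.2.trans hy.2⟩
  obtain ⟨hQpos, hQlt⟩ := hQbd t ⟨ht.1, htIu.2⟩
  exact hasDerivAt_primitive_one_sub_cdf01_comp hF htIu.2 hQpos.le hQlt (hcont htIu) (hQ' htIu)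

theorem regret_constant_along_quantiles_general
    (F : Measure ℝ) (hF : IsProbOn F)
    (Q : ℝ → ℝ) (hQac : AbsContOn01 Q) (hQmono : StrictMonoOn Q Iu)
    (hQ0 : Q 0 = 0)
    (hQbd : ∀ y ∈ Set.Ioc (0:ℝ) 1, 0 < Q y ∧ Q y < qinv F y)
    (hode : ∀ᵐ y ∂(volume.restrict Iu),
      HasDerivAt Q ((qinv F y - Q y) / (1 - cdf01 F (Q y))) y) :
    ∀ y ∈ Iu,
      (∫ t in (Q y)..(1:ℝ), (1 - cdf01 F t)) - (∫ t in y..(1:ℝ), (qinv F t - Q t))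
        = ∫ t in (0:ℝ)..1, Q t := by
  intro y hy
  have := hF.1
  have hQac' := hQac.absolutelyContinuousOnInterval
  have hQint : IntervalIntegrable Q volume 0 1 := hQac'.continuousOn.intervalIntegrable
  have hqint : IntervalIntegrable (qinv F) volume 0 1 :=
    ((qinv_monotoneOn hF).mono (by simp [Icc_subset_Iic_self])).intervalIntegrable
  have hdiff_int : IntervalIntegrable (fun t => qinv F t - Q t) volume 0 y :=
    (hqint.sub hQint).mono_set (uIcc_subset_uIcc left_mem_uIcc (by rwa [uIcc_of_le zero_le_one]))
  rw [← integral_interval_sub_left (intervalIntegrable_one_sub_cdf01 0 1)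
      (intervalIntegrable_one_sub_cdf01 0 (Q y)),
    ← integral_interval_sub_left (hqint.sub hQint) hdiff_int,
    integral_one_sub_cdf01_eq_integral_qinv_sub hF hQac' hQmono.injOn hQ0 hQbd hode hy,
    integral_sub hqint hQint, integral_qinv_eq_integral_one_sub_cdf01 hF]
  ring

/-- Lemma: all competing bids `Q*(y)` yield the same regret: if `Q*` is
absolutely continuous, strictly increasing, with `Q*(0) = 0`, `0 < Q*(y) < F⁻(y)` on `(0,1]`,
and solves `(Q*)'(y) = (F⁻(y) − Q*(y))/(1 − F(Q*(y)))` a.e., then for all `y ∈ [0,1]`,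
`∫_{Q*(y)}^1 (1 − F(t)) dt − ∫_y^1 (F⁻(t) − Q*(t)) dt = ∫_0^1 Q*(t) dt`. -/
theorem regret_constant_along_quantiles
    (F : Measure ℝ) (hF : IsProbOn F) (hF0 : F {0} = 0)
    (Q : ℝ → ℝ) (hQac : AbsContOn01 Q) (hQmono : StrictMonoOn Q Iu)
    (hQmaps : MapsTo Q Iu Iu) (hQ0 : Q 0 = 0)
    (hQbd : ∀ y ∈ Set.Ioc (0:ℝ) 1, 0 < Q y ∧ Q y < qinv F y)
    (hode : ∀ᵐ y ∂(volume.restrict Iu),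
      HasDerivAt Q ((qinv F y - Q y) / (1 - cdf01 F (Q y))) y) :
    ∀ y ∈ Iu,
      (∫ t in (Q y)..(1:ℝ), (1 - cdf01 F t)) - (∫ t in y..(1:ℝ), (qinv F t - Q t))
        = ∫ t in (0:ℝ)..1, Q t :=
  regret_constant_along_quantiles_general F hF Q hQac hQmono hQ0 hQbd hode

end FPA
end
end
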